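/- arXiv:2203.17146 — 4 statements merged into one kernel-verified Lean document; each statement's English description precedes it below -/
import Mathlib

section
/- For every real ε with 0 < ε ≤ 1, there exist positive integers n and k and agents x : Fin n → ℝ on the real line such that no k-clustering Y : Fin k → ℝ is a (2 − ε, 1)-core clustering; that is, for every Y : Fin k → ℝ there exist a set S ⊆ Fin n with |S| ≥ (2 − ε)·n/k and a point y' ∈ ℝ with Σ_{i∈S} |x_i − y'| < Σ_{i∈S} min_{j<k} |x_i − Y_j|. -/
/-!
Take `m ≥ 2 / ε`, put `2m` agents at each of the locations `6j` and `6j + 2` (`j < m`) and use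
`k = 2m - 1` centers. Two of the `2m` locations share their nearest center, so by the triangle
inequality some pair `j` has total cost at least `2` at its two locations (locations of different
pairs are at least `4` apart). All agents of pair `j` except one at its cheaper location form a
coalition of `4m - 1 ≥ (2 - ε) n / k` agents; moving to one center at the more expensive location
costs them `2 (2m - 1)`, whereas they now pay at least `(2m - 1/2) · 2`.
-/

/-- The cost of agent location `p` under the `k`-clustering `Y`:
the minimum distance from `p` to a center of `Y`. -/
noncomputable def clusterCost {X : Type*} [MetricSpace X] {k : ℕ} (Y : Fin k → X) (p : X) : ℝ :=
  sInf (Set.range fun j => dist p (Y j))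


open Finset

section ClusterCost

variable {X : Type*} [MetricSpace X] {k : ℕ}

lemma clusterCost_nonneg (Y : Fin k → X) (p : X) : 0 ≤ clusterCost Y p :=
  Real.sInf_nonneg <| by rintro _ ⟨j, rfl⟩; exact dist_nonneg

lemma exists_clusterCost_eq (hk : 0 < k) (Y : Fin k → X) (p : X) :
    ∃ j, clusterCost Y p = dist p (Y j) := by
  have hne : (Set.range fun j => dist p (Y j)).Nonempty := ⟨_, ⟨⟨0, hk⟩, rfl⟩⟩
  obtain ⟨j, hj⟩ := hne.csInf_mem (Set.finite_range _)
  exact ⟨j, hj.symm⟩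

/-- Pigeonhole: more locations than centers force two locations onto a common nearest center. -/
lemma exists_ne_dist_le_clusterCost_add {ι : Type*} [Fintype ι] (hk : 0 < k)
    (hι : k < Fintype.card ι) (Y : Fin k → X) (p : ι → X) :
    ∃ a b, a ≠ b ∧ dist (p a) (p b) ≤ clusterCost Y (p a) + clusterCost Y (p b) := by
  choose g hg using fun a => exists_clusterCost_eq hk Y (p a)
  obtain ⟨a, b, hab, hgab⟩ := Fintype.exists_ne_map_eq_of_card_lt g (by simpa using hι)
  refine ⟨a, b, hab, ?_⟩
  rw [hg a, hg b, hgab]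
  exact dist_triangle_right _ _ _

end ClusterCost

def pairPoint (j : ℕ) (b : Bool) : ℝ := 6 * j + 2 * b.toNat

lemma dist_pairPoint_of_ne {j : ℕ} {b b' : Bool} (h : b ≠ b') :
    dist (pairPoint j b) (pairPoint j b') = 2 := by
  cases b <;> cases b' <;> simp_all [pairPoint]

lemma four_le_dist_pairPoint {j j' : ℕ} (h : j ≠ j') (b b' : Bool) :
    4 ≤ dist (pairPoint j b) (pairPoint j' b') := by
  have hb : (b.toNat : ℝ) ≤ 1 := by exact_mod_cast Bool.toNat_le b
  have hb' : (b'.toNat : ℝ) ≤ 1 := by exact_mod_cast Bool.toNat_le b'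
  rw [pairPoint, pairPoint, Real.dist_eq, le_abs]
  rcases h.lt_or_gt with h | h
  · have : (j : ℝ) + 1 ≤ j' := by exact_mod_cast h
    right; linarith
  · have : (j' : ℝ) + 1 ≤ j := by exact_mod_cast h
    left; linarith

lemma exists_two_le_sum_clusterCost_pairPoint {m k : ℕ} (hk : 0 < k) (hkm : k < 2 * m)
    (Y : Fin k → ℝ) : ∃ j : Fin m, 2 ≤ ∑ b, clusterCost Y (pairPoint j b) := by
  have single_le (j : ℕ) (b : Bool) :
      clusterCost Y (pairPoint j b) ≤ ∑ b', clusterCost Y (pairPoint j b') :=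
    single_le_sum (fun _ _ => clusterCost_nonneg Y _) (mem_univ b)
  obtain ⟨⟨j, b⟩, ⟨j', b'⟩, hne, hle⟩ := exists_ne_dist_le_clusterCost_add hk
    (by simpa [mul_comm] using hkm) Y (fun t : Fin m × Bool => pairPoint t.1 t.2)
  by_cases hj : j = j'
  · subst hj
    have hb : b ≠ b' := fun h => hne (by rw [h])
    refine ⟨j, ?_⟩
    rw [dist_pairPoint_of_ne hb] at hle
    cases b <;> cases b' <;> simp only [ne_eq, not_true_eq_false] at hb <;>
      linarith [Fintype.sum_bool fun b => clusterCost Y (pairPoint j b)]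
  · have h4 := four_le_dist_pairPoint (Fin.val_ne_of_ne hj) b b'
    by_cases hcost : 2 ≤ clusterCost Y (pairPoint j b)
    · exact ⟨j, hcost.trans (single_le j b)⟩
    · exact ⟨j', by linarith [single_le j' b']⟩

lemma sum_bool_eq_add_not {M : Type*} [AddCommMonoid M] (f : Bool → M) (c : Bool) :
    ∑ b, f b = f c + f (!c) := by
  cases c <;> simp [add_comm]

lemma sum_erase_univ_prod_fst {R β α : Type*} [CommRing R] [Fintype β] [DecidableEq β]
    [Fintype α] [DecidableEq α] (g : β → R) (c : β) (a : α) :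
    ∑ t ∈ (univ : Finset (β × α)).erase (c, a), g t.1 = Fintype.card α * ∑ b, g b - g c := by
  rw [sum_erase_eq_sub (mem_univ _), Fintype.sum_prod_type, mul_sum]
  simp

lemma exists_sum_dist_lt_sum_clusterCost {k j : ℕ} (Y : Fin k → ℝ)
    (hY : 2 ≤ ∑ b, clusterCost Y (pairPoint j b)) {α : Type*} [Fintype α] [DecidableEq α]
    (a : α) : ∃ c : Bool,
      ∑ t ∈ (univ : Finset (Bool × α)).erase (c, a), |pairPoint j t.1 - pairPoint j (!c)| <
        ∑ t ∈ (univ : Finset (Bool × α)).erase (c, a), clusterCost Y (pairPoint j t.1) := by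
  have hα : (1 : ℝ) ≤ Fintype.card α := by exact_mod_cast Fintype.card_pos_iff.mpr ⟨a⟩
  obtain ⟨c, hc⟩ : ∃ c : Bool,
      clusterCost Y (pairPoint j c) ≤ clusterCost Y (pairPoint j (!c)) := by
    by_cases h : clusterCost Y (pairPoint j false) ≤ clusterCost Y (pairPoint j true)
    · exact ⟨false, h⟩
    · exact ⟨true, (not_le.mp h).le⟩
  have hdist : |pairPoint j c - pairPoint j (!c)| = 2 := by
    rw [← Real.dist_eq, dist_pairPoint_of_ne (Bool.not_ne_self c).symm]
  refine ⟨c, ?_⟩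
  rw [sum_erase_univ_prod_fst (fun b => |pairPoint j b - pairPoint j (!c)|),
    sum_erase_univ_prod_fst (fun b => clusterCost Y (pairPoint j b)), sum_bool_eq_add_not _ c,
    sum_bool_eq_add_not _ c, hdist, sub_self, abs_zero]
  rw [sum_bool_eq_add_not _ c] at hY
  nlinarith

lemma two_sub_mul_div_le {ε m : ℝ} (hm : 1 ≤ m) (hεm : 2 ≤ ε * m) :
    (2 - ε) * (4 * m ^ 2) / (2 * m - 1) ≤ 4 * m - 1 := by
  rw [div_le_iff₀ (by linarith)]
  nlinarith

theorem stmt11_general (ε : ℝ) (hε0 : 0 < ε) :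
    ∃ (n k : ℕ), 0 < n ∧ 0 < k ∧
      ∃ x : Fin n → ℝ,
        ∀ Y : Fin k → ℝ,
          ∃ S : Finset (Fin n), (2 - ε) * (n : ℝ) / (k : ℝ) ≤ S.card ∧
            ∃ y' : ℝ, ∑ i ∈ S, |x i - y'| < ∑ i ∈ S, clusterCost Y (x i) := by
  obtain ⟨m, hm, hεm⟩ : ∃ m : ℕ, 0 < m ∧ 2 ≤ ε * m :=
    ⟨⌈2 / ε⌉₊, Nat.ceil_pos.mpr (by positivity), (div_le_iff₀' hε0).mp (Nat.le_ceil _)⟩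
  let a : Fin (2 * m) := ⟨0, by omega⟩
  let e := (Fintype.equivFin (Fin m × Bool × Fin (2 * m))).symm
  refine ⟨_, 2 * m - 1, Fintype.card_pos_iff.mpr ⟨(⟨0, hm⟩, true, a)⟩, by omega,
    fun i => pairPoint (e i).1 (e i).2.1, fun Y => ?_⟩
  obtain ⟨j, hj⟩ := exists_two_le_sum_clusterCost_pairPoint (m := m) (by omega) (by omega) Y
  obtain ⟨c, hc⟩ := exists_sum_dist_lt_sum_clusterCost Y hj a
  let f := (Function.Embedding.sectR j _).trans e.symm.toEmbedding
  refine ⟨(univ.erase (c, a)).map f, ?_, pairPoint j (!c), by simpa [f] using hc⟩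
  have := two_sub_mul_div_le (by exact_mod_cast hm) hεm
  simp only [card_map, card_erase_of_mem (mem_univ _), card_univ, Fintype.card_prod,
    Fintype.card_bool, Fintype.card_fin]
  push_cast [Nat.cast_sub (by omega : 1 ≤ 2 * m), Nat.cast_sub (by omega : 1 ≤ 2 * (2 * m))]
  convert this using 2 <;> ring

theorem stmt11 (ε : ℝ) (hε0 : 0 < ε) (hε1 : ε ≤ 1) :
    ∃ (n k : ℕ), 0 < n ∧ 0 < k ∧
      ∃ x : Fin n → ℝ,
        ∀ Y : Fin k → ℝ,
          ∃ S : Finset (Fin n), (2 - ε) * (n : ℝ) / (k : ℝ) ≤ S.card ∧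
            ∃ y' : ℝ, ∑ i ∈ S, |x i - y'| < ∑ i ∈ S, clusterCost Y (x i) :=
  stmt11_general ε hε0
end

section
/- Let G be a finite connected acyclic simple graph (a tree) on vertex set V, with graph distance d(u,v) equal to the number of edges on the shortest u–v path (viewed as a real number). Let x : Fin n → V be agents at vertices with n ≥ 1 and k ≥ 1, and let M = V. Then there exists a k-clustering Y : Fin k → V that is a (2, 1)-core clustering; that is, for every set S ⊆ Fin n with |S| ≥ 2n/k and every vertex y' ∈ V, one has Σ_{i∈S} d(x_i, y') ≥ Σ_{i∈S} min_{j<k} d(x_i, Y_j). -/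
/-!
Root the tree at `r` and call `x` below `v` when `v` lies on the geodesic from `x` to `r`.
Greedily put a center at a deepest vertex with at least `n / k` remaining agents below it and
remove those agents; every center removes at least `n / k` agents, so at most `k` are placed.
For any `y'`, fewer than `n / k` agents have no center on a geodesic to `y'`: if the first center
`v` is above `y'`, such agents lie below the neighbour of `v` toward `y'`, which is lighter than
`n / k` by the choice of `v`; otherwise `v` lies between each agent it removed and `y'`, and
induction handles the remaining agents.
An agent with a center between it and `y'` pays at least `d(y', Y)` less at `Y` than at `y'`,
any other agent at most `d(y', Y)` more, and `|S| ≥ 2n/k` makes the former at least half of `S`.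
-/

/-- The cost of an agent located at vertex `p` under the `k`-clustering `Y` in a graph `G`:
the minimum graph distance from `p` to a center of `Y`, as a real number. -/
noncomputable def treeClusterCost {V : Type*} (G : SimpleGraph V) {k : ℕ}
    (Y : Fin k → V) (p : V) : ℝ :=
  sInf (Set.range fun j => (G.dist p (Y j) : ℝ))

open Finset

namespace SimpleGraph

variable {V : Type*} {G : SimpleGraph V}

def Between (G : SimpleGraph V) (u a v : V) : Prop :=
  G.dist u a + G.dist a v = G.dist u v

noncomputable instance {u a v : V} : Decidable (G.Between u a v) :=
  inferInstanceAs (Decidable (_ = _))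

lemma between_self_right (u v : V) : G.Between u v v := by
  simp [Between]

lemma Walk.between_of_mem_support {u v a : V} (p : G.Walk u v) (hp : p.length = G.dist u v)
    (ha : a ∈ p.support) : G.Between u a v := by
  classical
  have hsplit := congrArg Walk.length (p.take_spec ha)
  rw [Walk.length_append] at hsplit
  have := dist_le (p.takeUntil a ha)
  have := dist_le (p.dropUntil a ha)
  have := (p.takeUntil a ha).reachable.dist_triangle_left v
  unfold Between
  omega

lemma IsTree.mem_support_of_between (hG : G.IsTree) {u v a : V} (p : G.Walk u v)
    (h : G.Between u a v) : a ∈ p.support := by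
  classical
  obtain ⟨q₁, -, hq₁⟩ := hG.connected.exists_path_of_dist u a
  obtain ⟨q₂, -, hq₂⟩ := hG.connected.exists_path_of_dist a v
  have hgeod : (q₁.append q₂).IsPath :=
    Walk.isPath_of_length_eq_dist _ (by rw [Walk.length_append, hq₁, hq₂]; exact h)
  have hq : q₁.append q₂ = p.bypass := congrArg Subtype.val <|
    (hG.isAcyclic.subsingleton_path u v).elim ⟨_, hgeod⟩ ⟨_, p.bypass_isPath⟩
  apply p.support_bypass_subset_support
  rw [← hq, Walk.mem_support_append_iff]
  exact .inr q₂.start_mem_support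

/-- In a tree, the geodesic triangle on `u, z, r` is a tripod. -/
lemma IsTree.between_or_between (hG : G.IsTree) {u a r : V} (z : V) (h : G.Between u a r) :
    G.Between u a z ∨ G.Between z a r := by
  obtain ⟨p, hp⟩ := hG.connected.exists_walk_length_eq_dist u z
  obtain ⟨q, hq⟩ := hG.connected.exists_walk_length_eq_dist z r
  have := hG.mem_support_of_between (p.append q) h
  rw [Walk.mem_support_append_iff] at this
  exact this.imp (p.between_of_mem_support hp) (q.between_of_mem_support hq)

lemma IsTree.exists_child_toward (hG : G.IsTree) {y c r : V} (hc : G.Between y c r)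
    (hne : c ≠ y) :
    ∃ w, G.dist c r < G.dist w r ∧ ∀ x, G.Between x c y ∨ G.Between x w r := by
  obtain ⟨p, hp⟩ := hG.connected.exists_walk_length_eq_dist c y
  have hnil : ¬p.Nil := Walk.not_nil_of_ne hne
  have hadj : G.Adj c p.snd := p.adj_snd hnil
  set w := p.snd
  have hcw : G.dist c w = 1 := dist_eq_one_iff_adj.mpr hadj
  have hwy : G.dist w y + 1 ≤ G.dist c y := by
    rw [← hp, ← p.length_tail_add_one hnil]
    exact Nat.add_le_add_right (dist_le p.tail) 1
  have := G.dist_comm (u := c) (v := w)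
  have := G.dist_comm (u := c) (v := y)
  have := G.dist_comm (u := w) (v := y)
  have := hG.connected.dist_triangle (u := c) (v := w) (w := y)
  have := hG.connected.dist_triangle (u := w) (v := c) (w := r)
  have := hG.connected.dist_triangle (u := y) (v := w) (w := r)
  unfold Between at hc
  have hw : G.Between y w r := by unfold Between; omega
  have hwc : G.Between w c r := by unfold Between; omega
  refine ⟨w, by omega, fun x => or_iff_not_imp_right.mpr fun hx => ?_⟩
  have hywx := (hG.between_or_between x hw).resolve_right hx
  have := G.dist_comm (u := x) (v := y)
  have := G.dist_comm (u := x) (v := w)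
  have := G.dist_comm (u := x) (v := c)
  unfold Between at *
  rcases hG.dist_eq_dist_add_one_of_adj x hadj with hxc | hxw
  · rcases hG.between_or_between x hwc with h | h <;> unfold Between at h <;> omega
  · omega

theorem IsTree.exists_separating_centers [Fintype V] (hG : G.IsTree) (r : V) {ι : Type*}
    (x : ι → V) [DecidableEq V] [DecidableEq ι] {n k : ℕ} (hn : 0 < n) (R : Finset ι) :
    ∃ C : Finset V, n * #C < k * #R + n ∧
      ∀ y, k * #{i ∈ R | ∀ c ∈ C, ¬G.Between (x i) c y} < n := by
  induction R using Finset.strongInduction with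
  | H R ih =>
  by_cases hR : k * #R < n
  · refine ⟨∅, by simp [hn], fun y => ?_⟩
    exact (Nat.mul_le_mul_left k (card_filter_le _ _)).trans_lt hR
  obtain ⟨v, hv, hv_max⟩ := exists_max_image {v | n ≤ k * #{i ∈ R | G.Between (x i) v r}}
    (G.dist · r) ⟨r, by simpa [between_self_right] using hR⟩
  set T := {i ∈ R | G.Between (x i) v r}
  have hT : n ≤ k * #T := (mem_filter.mp hv).2
  have hT_ne : T.Nonempty := card_pos.mp (Nat.pos_of_mul_pos_left (hn.trans_le hT))
  obtain ⟨C, hC_card, hC⟩ := ih (R \ T) (sdiff_ssubset (filter_subset _ _) hT_ne)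
  refine ⟨insert v C, ?_, fun y => ?_⟩
  · have h₁ := card_insert_le v C
    have h₂ := card_sdiff_add_card_eq_card (filter_subset (fun i => G.Between (x i) v r) R)
    have h₃ : n * #(insert v C) ≤ n * (#C + 1) := Nat.mul_le_mul_left n h₁
    have h₄ : k * #R = k * #(R \ T) + k * #T := by rw [← mul_add, h₂]
    rw [mul_add] at h₃
    omega
  by_cases hy : G.Between y v r
  · rcases eq_or_ne v y with rfl | hvy
    · simp [between_self_right, hn]
    obtain ⟨w, hw_deep, hw⟩ := hG.exists_child_toward hy hvy
    have hw_light : k * #{i ∈ R | G.Between (x i) w r} < n := by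
      by_contra! hw_heavy
      exact (hv_max w (mem_filter.mpr ⟨mem_univ w, hw_heavy⟩)).not_gt hw_deep
    refine lt_of_le_of_lt (Nat.mul_le_mul_left k (card_le_card fun i hi => ?_)) hw_light
    simp only [mem_filter] at hi ⊢
    exact ⟨hi.1, (hw (x i)).resolve_left (hi.2 v (mem_insert_self v C))⟩
  · refine lt_of_le_of_lt (Nat.mul_le_mul_left k (card_le_card fun i hi => ?_)) (hC y)
    simp only [mem_filter] at hi ⊢
    obtain ⟨hiR, hi⟩ := hi
    refine ⟨mem_sdiff.mpr ⟨hiR, fun hiT => ?_⟩, fun c hc => hi c (mem_insert_of_mem hc)⟩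
    rcases hG.between_or_between y (mem_filter.mp hiT).2 with h | h
    · exact hi v (mem_insert_self v C) h
    · exact hy h

end SimpleGraph

lemma Finset.sum_le_sum_of_two_mul_card_le {ι : Type*} [DecidableEq ι] {a b : ι → ℝ}
    {D : ℝ} (hD : 0 ≤ D) {S T : Finset ι} (hTS : T ⊆ S) (hT : 2 * #T ≤ #S)
    (h_le : ∀ i ∈ T, a i ≤ b i + D) (h_add_le : ∀ i ∈ S \ T, a i + D ≤ b i) :
    ∑ i ∈ S, a i ≤ ∑ i ∈ S, b i := by
  have hT_le : (#T : ℝ) ≤ #(S \ T) := by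
    have := card_sdiff_add_card_eq_card hTS
    exact_mod_cast (by omega : #T ≤ #(S \ T))
  have h₁ := sum_le_sum h_le
  have h₂ := sum_le_sum h_add_le
  rw [sum_add_distrib, sum_const, nsmul_eq_mul] at h₁ h₂
  rw [← sum_sdiff hTS, ← sum_sdiff hTS (f := b)]
  nlinarith

section treeClusterCost

variable {V : Type*} (G : SimpleGraph V) {k : ℕ}

lemma treeClusterCost_le (Y : Fin k → V) (p : V) (j : Fin k) :
    treeClusterCost G Y p ≤ G.dist p (Y j) :=
  csInf_le (Set.finite_range _).bddBelow ⟨j, rfl⟩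

lemma exists_treeClusterCost_eq (hk : 0 < k) (Y : Fin k → V) (p : V) :
    ∃ j, treeClusterCost G Y p = G.dist p (Y j) := by
  have : Nonempty (Fin k) := ⟨⟨0, hk⟩⟩
  obtain ⟨j, hj⟩ :=
    (Set.range_nonempty fun j => (G.dist p (Y j) : ℝ)).csInf_mem (Set.finite_range _)
  exact ⟨j, hj.symm⟩

theorem sum_treeClusterCost_le {G} (hG : G.Connected) (hk : 0 < k) (Y : Fin k → V) {ι : Type*}
    (x : ι → V) (S : Finset ι) (y : V)
    (hS : 2 * #{i ∈ S | ∀ j, ¬G.Between (x i) (Y j) y} ≤ #S) :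
    ∑ i ∈ S, treeClusterCost G Y (x i) ≤ ∑ i ∈ S, (G.dist (x i) y : ℝ) := by
  classical
  obtain ⟨j₀, hj₀⟩ := exists_treeClusterCost_eq G hk Y y
  refine sum_le_sum_of_two_mul_card_le (hj₀ ▸ Nat.cast_nonneg _) (filter_subset _ _) hS
    (fun i _ => ?_) (fun i hi => ?_)
  · have := treeClusterCost_le G Y (x i) j₀
    have : (G.dist (x i) (Y j₀) : ℝ) ≤ G.dist (x i) y + G.dist y (Y j₀) := by
      exact_mod_cast hG.dist_triangle
    linarith
  · obtain ⟨j, hj⟩ : ∃ j, G.Between (x i) (Y j) y := by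
      simp only [mem_sdiff, mem_filter, not_and, not_forall, not_not] at hi
      exact hi.2 hi.1
    have := treeClusterCost_le G Y (x i) j
    have hD := treeClusterCost_le G Y y j
    rw [SimpleGraph.dist_comm] at hD
    have : (G.dist (x i) (Y j) : ℝ) + G.dist (Y j) y = G.dist (x i) y := by exact_mod_cast hj
    linarith

end treeClusterCost

lemma Finset.exists_fin_subset_range {V : Type*} {k : ℕ} (C : Finset V) (hC : #C ≤ k) (d : V) :
    ∃ Y : Fin k → V, ↑C ⊆ Set.range Y := by
  classical
  refine ⟨fun j => if h : (j : ℕ) < #C then C.equivFin.symm ⟨j, h⟩ else d, fun c hc => ?_⟩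
  exact ⟨Fin.castLE hC (C.equivFin ⟨c, hc⟩), by simp⟩

theorem stmt13 {V : Type*} [Fintype V] (G : SimpleGraph V)
    (hGconn : G.Connected) (hGacyc : G.IsAcyclic)
    {n k : ℕ} (hn : 0 < n) (hk : 0 < k) (x : Fin n → V) :
    ∃ Y : Fin k → V,
      ∀ S : Finset (Fin n), 2 * (n : ℝ) / (k : ℝ) ≤ S.card →
        ∀ y' : V,
          ∑ i ∈ S, treeClusterCost G Y (x i) ≤ ∑ i ∈ S, (G.dist (x i) y' : ℝ) := by
  classical
  obtain ⟨r⟩ := hGconn.nonempty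
  obtain ⟨C, hC_card, hC⟩ :=
    SimpleGraph.IsTree.exists_separating_centers ⟨hGconn, hGacyc⟩ r x (k := k) hn univ
  have hCk : #C ≤ k := by
    have : n * #C < n * (k + 1) := by simpa [mul_add, mul_comm] using hC_card
    exact Nat.lt_succ_iff.mp (Nat.lt_of_mul_lt_mul_left this)
  obtain ⟨Y, hY⟩ := C.exists_fin_subset_range hCk r
  refine ⟨Y, fun S hS y => sum_treeClusterCost_le hGconn hk Y x S y ?_⟩
  have h_bad : #{i ∈ S | ∀ j, ¬G.Between (x i) (Y j) y}
      ≤ #{i ∈ univ | ∀ c ∈ C, ¬G.Between (x i) c y} := by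
    refine card_le_card fun i hi => ?_
    simp only [mem_filter] at hi ⊢
    refine ⟨mem_univ i, fun c hc => ?_⟩
    obtain ⟨j, rfl⟩ := hY hc
    exact hi.2 j
  have hS' : 2 * n ≤ #S * k := by
    exact_mod_cast (div_le_iff₀ (by exact_mod_cast hk : (0 : ℝ) < k)).mp hS
  have := hC y
  nlinarith
end

section
/- Let k ≥ 2 and n = 2k, and let (X,d) be a metric space containing points x_1, …, x_n with d(x_i, x_j) = 1 for all i ≠ j. Take the agents to be x : Fin n → X given by these n points and M = {x_1, …, x_n}. Then for every real α with 1 ≤ α ≤ k/2 and every k-clustering Y : Fin k → M, there exist a set S ⊆ Fin n with |S| ≥ α·n/k and a point y' ∈ M such that Σ_{i∈S} d(x_i, y') < Σ_{i∈S} min_{j<k} d(x_i, Y_j). In particular, no k-clustering of this instance is an (α, 1)-core clustering for any α ≤ k/2 = n/4. -/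
/-!
Each of the `k` centers sits on one of the `2k` agents, so at least `k ≥ 2α` agents are left
without a center at their own location; each of them pays cost `1`. All of them prefer to move
together to the location of one of them, `y'`, where their total cost drops by exactly `1`.
-/

section Equilateral

variable {X ι : Type*} [MetricSpace X] {x : ι → X}

lemma clusterCost_eq_of_forall_dist_eq {k : ℕ} [NeZero k] {Y : Fin k → X} {p : X} {c : ℝ}
    (h : ∀ j, dist p (Y j) = c) : clusterCost Y p = c := by
  have hrange : (Set.range fun j => dist p (Y j)) = {c} := by
    rw [funext h, Set.range_const]
  rw [clusterCost, hrange, csInf_singleton]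

lemma clusterCost_comp_eq_one (hx : Pairwise fun i j => dist (x i) (x j) = 1)
    {k : ℕ} [NeZero k] {g : Fin k → ι} {i : ι} (hi : i ∉ Set.range g) :
    clusterCost (x ∘ g) (x i) = 1 :=
  clusterCost_eq_of_forall_dist_eq fun j => hx fun hij => hi ⟨j, hij.symm⟩

lemma sum_dist_lt_card [DecidableEq ι] (hx : Pairwise fun i j => dist (x i) (x j) = 1)
    {S : Finset ι} {i₀ : ι} (hi₀ : i₀ ∈ S) :
    ∑ i ∈ S, dist (x i) (x i₀) < S.card := by
  have hsum : ∑ i ∈ S, dist (x i) (x i₀) = (S.erase i₀).card := by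
    rw [← Finset.add_sum_erase S _ hi₀, dist_self, zero_add,
      Finset.sum_congr rfl fun i hi => hx (Finset.ne_of_mem_erase hi), Finset.sum_const,
      nsmul_one]
  rw [hsum]
  exact_mod_cast Finset.card_erase_lt_of_mem hi₀

end Equilateral

lemma Finset.card_sub_le_card_compl_image {ι α : Type*} [Fintype ι] [Fintype α] [DecidableEq ι]
    (g : α → ι) : Fintype.card ι - Fintype.card α ≤ (Finset.univ.image g)ᶜ.card := by
  rw [Finset.card_compl]
  exact Nat.sub_le_sub_left (Finset.card_image_le.trans_eq Finset.card_univ) _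

theorem stmt16_general {X : Type*} [MetricSpace X] {n k : ℕ} (hk : 2 ≤ k) (hn : n = 2 * k)
    (x : Fin n → X) (hx : ∀ i j, i ≠ j → dist (x i) (x j) = 1)
    (α : ℝ) (hα2 : α ≤ (k : ℝ) / 2)
    (Y : Fin k → X) (hY : ∀ j, Y j ∈ Set.range x) :
    ∃ S : Finset (Fin n), α * (n : ℝ) / (k : ℝ) ≤ S.card ∧
      ∃ y' ∈ Set.range x,
        ∑ i ∈ S, dist (x i) y' < ∑ i ∈ S, clusterCost Y (x i) := by
  have : NeZero k := ⟨by omega⟩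
  choose g hg using hY
  obtain rfl : x ∘ g = Y := funext hg
  set U := (Finset.univ.image g)ᶜ
  have hU : k ≤ U.card := by
    have : Fintype.card (Fin n) - Fintype.card (Fin k) ≤ U.card :=
      Finset.card_sub_le_card_compl_image g
    simp only [Fintype.card_fin] at this
    omega
  obtain ⟨i₀, hi₀⟩ : U.Nonempty := Finset.card_pos.mp (by omega)
  have hcost : ∑ i ∈ U, clusterCost (x ∘ g) (x i) = U.card := by
    rw [Finset.sum_congr rfl fun i hi => clusterCost_comp_eq_one hx (by simpa [U] using hi),
      Finset.sum_const, nsmul_one]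
  refine ⟨U, ?_, x i₀, ⟨i₀, rfl⟩, hcost ▸ sum_dist_lt_card hx hi₀⟩
  have hnk : α * (n : ℝ) / k = 2 * α := by
    rw [hn]
    field_simp
    push_cast
    ring
  rw [hnk]
  have : (k : ℝ) ≤ U.card := by exact_mod_cast hU
  linarith

theorem stmt16 {X : Type*} [MetricSpace X] {n k : ℕ} (hk : 2 ≤ k) (hn : n = 2 * k)
    (x : Fin n → X) (hx : ∀ i j, i ≠ j → dist (x i) (x j) = 1)
    (α : ℝ) (hα1 : 1 ≤ α) (hα2 : α ≤ (k : ℝ) / 2)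
    (Y : Fin k → X) (hY : ∀ j, Y j ∈ Set.range x) :
    ∃ S : Finset (Fin n), α * (n : ℝ) / (k : ℝ) ≤ S.card ∧
      ∃ y' ∈ Set.range x,
        ∑ i ∈ S, dist (x i) y' < ∑ i ∈ S, clusterCost Y (x i) :=
  stmt16_general hk hn x hx α hα2 Y hY
end

section
/- Let (X,d) be a metric space, let x : Fin n → X be agents with n ≥ 1, let M ⊆ X be a finite nonempty set of feasible center locations, let k ≥ 1, and let α > 1 be a real number. Set β = max{4, 2/(α − 1) + 3}. Then there exists a k-clustering Y : Fin k → M that is an (α, β)-core clustering; that is, for every set S ⊆ Fin n with |S| ≥ α·n/k and every point y' ∈ M, one has β·Σ_{i∈S} d(x_i, y') ≥ Σ_{i∈S} min_{j<k} d(x_i, Y_j). -/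
open Finset NNReal

lemma clusterCost_le {X : Type*} [MetricSpace X] {k : ℕ} (Y : Fin k → X) (p : X) (t : Fin k) :
    clusterCost Y p ≤ dist p (Y t) :=
  csInf_le ⟨0, by rintro r ⟨i, rfl⟩; exact dist_nonneg⟩ ⟨t, rfl⟩

lemma clusterCost_le_dist_add_two_mul {X : Type*} [MetricSpace X] {k : ℕ} {Y : Fin k → X}
    {t : Fin k} {p q y' : X} {r : ℝ} (hpy' : dist p y' ≤ r) (hpY : dist p (Y t) ≤ r) :
    clusterCost Y q ≤ dist q y' + 2 * r := by
  have := dist_triangle4 q y' p (Y t)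
  have := clusterCost_le Y q t
  rw [dist_comm y' p] at *
  linarith

lemma exists_subset_card_eq_forall_le {ι α : Type*} [DecidableEq ι] [LinearOrder α]
    (f : ι → α) {S : Finset ι} {m : ℕ} (hm : m ≤ #S) :
    ∃ W ⊆ S, #W = m ∧ ∀ w ∈ W, ∀ v ∈ S \ W, f w ≤ f v := by
  induction m with
  | zero => exact ⟨∅, empty_subset _, card_empty, by simp⟩
  | succ m ih =>
    obtain ⟨W, hWS, hWcard, hWle⟩ := ih (by omega)
    have hne : (S \ W).Nonempty := by
      rw [← card_pos, card_sdiff_of_subset hWS]; omega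
    obtain ⟨v, hv, hvmin⟩ := exists_min_image (S \ W) f hne
    obtain ⟨hvS, hvW⟩ := mem_sdiff.mp hv
    refine ⟨insert v W, insert_subset hvS hWS, by rw [card_insert_of_notMem hvW, hWcard], ?_⟩
    intro w hw u hu
    obtain ⟨huS, huvW⟩ := mem_sdiff.mp hu
    have huW : u ∉ W := fun h => huvW (mem_insert_of_mem h)
    rcases mem_insert.mp hw with rfl | hwW
    · exact hvmin u (mem_sdiff.mpr ⟨huS, huW⟩)
    · exact hWle w hwW u (mem_sdiff.mpr ⟨huS, huW⟩)

section Capture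

variable {ι X : Type*}

def greedyRemaining [Fintype ι] [DecidableEq ι] (round : Finset ι → X × Finset ι) (t : ℕ) :
    Finset ι :=
  (fun U => U \ (round U).2)^[t] univ

lemma greedyRemaining_succ [Fintype ι] [DecidableEq ι] (round : Finset ι → X × Finset ι)
    (t : ℕ) :
    greedyRemaining round (t + 1) =
      greedyRemaining round t \ (round (greedyRemaining round t)).2 :=
  Function.iterate_succ_apply' _ _ _

variable [MetricSpace X]

noncomputable def coverRadius (x : ι → X) (y : X) (T : Finset ι) : ℝ≥0 :=
  T.sup fun i => nndist (x i) y

lemma dist_le_coverRadius {x : ι → X} {y : X} {T : Finset ι} {i : ι} (hi : i ∈ T) :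
    dist (x i) y ≤ coverRadius x y T :=
  NNReal.coe_le_coe.mpr (le_sup (f := fun i => nndist (x i) y) hi)

lemma exists_dist_eq_coverRadius {x : ι → X} {y : X} {T : Finset ι} (hT : T.Nonempty) :
    ∃ i ∈ T, dist (x i) y = coverRadius x y T := by
  obtain ⟨i, hi, h⟩ := exists_mem_eq_sup T hT fun i => nndist (x i) y
  exact ⟨i, hi, by rw [coverRadius, h, coe_nndist]⟩

/-- A round of greedy capture on the remaining agents `U`, with center `c.1` and captured
group `c.2`. -/
def IsGreedyRound (x : ι → X) (M : Set X) (m : ℕ) (U : Finset ι) (c : X × Finset ι) :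
    Prop :=
  c.1 ∈ M ∧ c.2 ⊆ U ∧ #c.2 = min m #U ∧
    ∀ z ∈ M, ∀ T ⊆ U, #T = min m #U → coverRadius x c.1 c.2 ≤ coverRadius x z T

lemma exists_isGreedyRound (x : ι → X) {M : Set X} (hMfin : M.Finite) (hMne : M.Nonempty)
    (m : ℕ) (U : Finset ι) : ∃ c, IsGreedyRound x M m U c := by
  set C : Set (X × Finset ι) := {c | c.1 ∈ M ∧ c.2 ⊆ U ∧ #c.2 = min m #U}
  have hCfin : C.Finite :=
    (hMfin.prod U.powerset.finite_toSet).subset fun c hc => ⟨hc.1, mem_powerset.mpr hc.2.1⟩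
  have hCne : C.Nonempty := by
    obtain ⟨z, hz⟩ := hMne
    obtain ⟨T, hTU, hT⟩ := exists_subset_card_eq (min_le_right m #U)
    exact ⟨(z, T), hz, hTU, hT⟩
  obtain ⟨c, ⟨hcM, hcU, hccard⟩, hcmin⟩ :=
    Set.exists_min_image C (fun c => coverRadius x c.1 c.2) hCfin hCne
  exact ⟨c, hcM, hcU, hccard, fun z hz T hTU hT => hcmin (z, T) ⟨hz, hTU, hT⟩⟩

section Greedy

variable [Fintype ι] [DecidableEq ι] {x : ι → X} {M : Set X} {m : ℕ}
  {round : Finset ι → X × Finset ι}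

lemma card_greedyRemaining_le (hround : ∀ U, IsGreedyRound x M m U (round U)) (t : ℕ) :
    #(greedyRemaining round t) ≤ Fintype.card ι - t * m := by
  induction t with
  | zero => simp [greedyRemaining]
  | succ t ih =>
    obtain ⟨-, hsub, hcard, -⟩ := hround (greedyRemaining round t)
    rw [greedyRemaining_succ, card_sdiff_of_subset hsub, hcard, Nat.succ_mul]
    omega

/-- Until a group `T` of `m` agents loses a member, it competes with every round; the round
that first takes one of its members therefore has radius at most that of `T` around `z`. -/
lemma subset_greedyRemaining_or_captured (hround : ∀ U, IsGreedyRound x M m U (round U))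
    {T : Finset ι} (hT : #T = m) {z : X} (hz : z ∈ M) (t : ℕ) :
    T ⊆ greedyRemaining round t ∨
      ∃ s < t, ∃ j ∈ T,
        dist (x j) (round (greedyRemaining round s)).1 ≤ coverRadius x z T := by
  induction t with
  | zero => exact Or.inl (subset_univ T)
  | succ t ih =>
    rcases ih with hsub | ⟨s, hs, j, hj, hjs⟩
    · obtain ⟨-, -, -, hopt⟩ := hround (greedyRemaining round t)
      by_cases hdisj : Disjoint T (round (greedyRemaining round t)).2
      · exact Or.inl (greedyRemaining_succ round t ▸ subset_sdiff.mpr ⟨hsub, hdisj⟩)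
      · obtain ⟨j, hjT, hjG⟩ := not_disjoint_iff.mp hdisj
        have hmin : #T = min m #(greedyRemaining round t) := by
          rw [hT, min_eq_left (hT ▸ card_le_card hsub)]
        exact Or.inr ⟨t, t.lt_succ_self, j, hjT,
          (dist_le_coverRadius hjG).trans (NNReal.coe_le_coe.mpr (hopt z hz T hsub hmin))⟩
    · exact Or.inr ⟨s, hs.trans t.lt_succ_self, j, hj, hjs⟩

end Greedy

def CapturesGroups (x : ι → X) (M : Set X) (m : ℕ) {k : ℕ} (Y : Fin k → X) : Prop :=
  ∀ T : Finset ι, T.Nonempty → #T = m → ∀ z ∈ M,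
    ∃ j ∈ T, ∃ t, dist (x j) (Y t) ≤ coverRadius x z T

theorem exists_capturesGroups [Fintype ι] [DecidableEq ι] (x : ι → X) {M : Set X}
    (hMfin : M.Finite) (hMne : M.Nonempty) {k m : ℕ} (hkm : Fintype.card ι ≤ k * m) :
    ∃ Y : Fin k → X, (∀ t, Y t ∈ M) ∧ CapturesGroups x M m Y := by
  choose round hround using exists_isGreedyRound x hMfin hMne m
  refine ⟨fun t => (round (greedyRemaining round t)).1, fun t => (hround _).1, ?_⟩
  intro T hTne hT z hz
  rcases subset_greedyRemaining_or_captured hround hT hz k with hsub | ⟨s, hs, j, hj, hjs⟩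
  · have hempty : greedyRemaining round k = ∅ :=
      card_eq_zero.mp (Nat.le_zero.mp ((card_greedyRemaining_le hround k).trans (by omega)))
    obtain ⟨i, hi⟩ := hTne
    exact absurd (hsub hi) (hempty ▸ notMem_empty i)
  · exact ⟨j, hj, ⟨s, hs⟩, hjs⟩

lemma card_sdiff_add_one_mul_coverRadius_le_sum {x : ι → X} {y' : X} {S W : Finset ι}
    [DecidableEq ι] (hWS : W ⊆ S) (hW : W.Nonempty)
    (hclose : ∀ w ∈ W, ∀ v ∈ S \ W, dist (x w) y' ≤ dist (x v) y') :
    (#(S \ W) + 1) * (coverRadius x y' W : ℝ) ≤ ∑ i ∈ S, dist (x i) y' := by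
  obtain ⟨w₀, hw₀, hw₀D⟩ := exists_dist_eq_coverRadius (x := x) (y := y') hW
  have hw₀' : w₀ ∉ S \ W := fun h => (mem_sdiff.mp h).2 hw₀
  have hfar : ∀ v ∈ insert w₀ (S \ W), (coverRadius x y' W : ℝ) ≤ dist (x v) y' := by
    intro v hv
    rcases mem_insert.mp hv with rfl | hv
    · exact hw₀D.ge
    · exact hw₀D ▸ hclose w₀ hw₀ v hv
  calc (#(S \ W) + 1) * (coverRadius x y' W : ℝ)
      = #(insert w₀ (S \ W)) • (coverRadius x y' W : ℝ) := by
        rw [card_insert_of_notMem hw₀', nsmul_eq_mul]; push_cast; ring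
    _ ≤ ∑ i ∈ insert w₀ (S \ W), dist (x i) y' := card_nsmul_le_sum _ _ _ hfar
    _ ≤ ∑ i ∈ S, dist (x i) y' :=
        sum_le_sum_of_subset_of_nonneg (insert_subset (hWS hw₀) sdiff_subset)
          fun _ _ _ => dist_nonneg

/-- `D` is the largest distance from `y'` of the `m` members of `S` closest to it. -/
lemma CapturesGroups.exists_sum_clusterCost_le [DecidableEq ι] {x : ι → X} {M : Set X}
    {m k : ℕ} {Y : Fin k → X} (hY : CapturesGroups x M m Y) (hm : 0 < m) {S : Finset ι}
    (hmS : m ≤ #S) {y' : X} (hy' : y' ∈ M) :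
    ∃ D : ℝ, 0 ≤ D ∧
      ∑ i ∈ S, clusterCost Y (x i) ≤ ∑ i ∈ S, dist (x i) y' + 2 * #S * D ∧
      (#S - m + 1) * D ≤ ∑ i ∈ S, dist (x i) y' := by
  obtain ⟨W, hWS, hWcard, hclose⟩ :=
    exists_subset_card_eq_forall_le (fun i => dist (x i) y') hmS
  have hW : W.Nonempty := card_pos.mp (hWcard ▸ hm)
  obtain ⟨j, hjW, t, hjt⟩ := hY W hW hWcard y' hy'
  refine ⟨coverRadius x y' W, (coverRadius x y' W).2, ?_, ?_⟩
  · calc ∑ i ∈ S, clusterCost Y (x i)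
        ≤ ∑ i ∈ S, (dist (x i) y' + 2 * (coverRadius x y' W : ℝ)) :=
          sum_le_sum fun i _ => clusterCost_le_dist_add_two_mul (dist_le_coverRadius hjW) hjt
      _ = ∑ i ∈ S, dist (x i) y' + 2 * #S * coverRadius x y' W := by
          rw [sum_add_distrib, sum_const, nsmul_eq_mul]; ring
  · have hcard : (#(S \ W) : ℝ) = #S - m := by
      rw [card_sdiff_of_subset hWS, hWcard, Nat.cast_sub hmS]
    rw [← hcard]
    exact card_sdiff_add_one_mul_coverRadius_le_sum hWS hW hclose

end Capture

lemma add_two_mul_le_of_mul_le {α s q c A D : ℝ} (hα : 1 < α) (hD : 0 ≤ D)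
    (hs : α * q ≤ s) (hc : s - q ≤ c) (hcD : c * D ≤ A) :
    A + 2 * s * D ≤ (2 / (α - 1) + 3) * A := by
  have hα1 : 0 < α - 1 := by linarith
  have hsc : s * (α - 1) ≤ α * c := by nlinarith
  have hsD : s * (α - 1) * D ≤ α * A :=
    (mul_le_mul_of_nonneg_right hsc hD).trans (by nlinarith)
  have h2 : 2 / (α - 1) * A * (α - 1) = 2 * A := by field_simp
  nlinarith

theorem stmt19 {X : Type*} [MetricSpace X] {n k : ℕ} (hn : 0 < n) (hk : 0 < k)
    (x : Fin n → X) (M : Set X) (hMfin : M.Finite) (hMne : M.Nonempty)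
    (α : ℝ) (hα : 1 < α) :
    ∃ Y : Fin k → X, (∀ j, Y j ∈ M) ∧
      ∀ S : Finset (Fin n), α * (n : ℝ) / (k : ℝ) ≤ S.card →
        ∀ y' ∈ M,
          ∑ i ∈ S, clusterCost Y (x i) ≤
            max 4 (2 / (α - 1) + 3) * ∑ i ∈ S, dist (x i) y' := by
  have hk' : (0 : ℝ) < k := Nat.cast_pos.mpr hk
  set m := ⌈(n : ℝ) / k⌉₊
  have hm : 0 < m := Nat.ceil_pos.mpr (by positivity)
  have hnm : n ≤ k * m := by
    have := Nat.le_ceil ((n : ℝ) / k)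
    rw [div_le_iff₀ hk'] at this
    exact_mod_cast (show (n : ℝ) ≤ k * m by linarith)
  obtain ⟨Y, hYM, hY⟩ := exists_capturesGroups x hMfin hMne (by rwa [Fintype.card_fin])
  refine ⟨Y, hYM, fun S hS y' hy' => ?_⟩
  rw [mul_div_assoc] at hS
  have hmS : m ≤ #S := Nat.ceil_le.mpr (by nlinarith [show (0 : ℝ) ≤ n / k by positivity])
  obtain ⟨D, hD, hcost, hfar⟩ := hY.exists_sum_clusterCost_le hm hmS hy'
  have hA : 0 ≤ ∑ i ∈ S, dist (x i) y' := sum_nonneg fun _ _ => dist_nonneg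
  calc ∑ i ∈ S, clusterCost Y (x i)
      ≤ ∑ i ∈ S, dist (x i) y' + 2 * #S * D := hcost
    _ ≤ (2 / (α - 1) + 3) * ∑ i ∈ S, dist (x i) y' :=
        add_two_mul_le_of_mul_le hα hD hS
          (by linarith [Nat.ceil_lt_add_one (show (0 : ℝ) ≤ n / k by positivity)]) hfar
    _ ≤ _ := mul_le_mul_of_nonneg_right (le_max_right _ _) hA
end
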